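/- Let n ≥ 3 and let F_n be the free group with basis a_1,…,a_n. Define words W_k recursively by W_0 = a_n and W_{k+1} = W_k a_{k+1} W_k^{−1}. For each j with 1 ≤ j ≤ n−1, the subgroup V_j generated by W_{n−1} a_n W_{n−1}^{−1} together with {a_i : 1 ≤ i ≤ n−1, i ≠ j} is a free factor of F_n of rank n−1, and F_n = V_j ∗ ⟨W_{j−1} a_j W_{j−1}^{−1}⟩ (internal free product). -/

import Mathlib

open Subgroup

/-- The free group of rank `n` with basis indexed by `Fin n`. -/
abbrev FG (n : ℕ) := FreeGroup (Fin n)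

/-- `G` is the internal free product of its subgroups `A` and `B`: the homomorphism
from the abstract free product `A ∗ B` induced by the inclusions is bijective. -/
def IsInternalFreeProduct {G : Type*} [Group G] (A B : Subgroup G) : Prop :=
  Function.Bijective ⇑(Monoid.Coprod.lift A.subtype B.subtype)

/-- A subgroup is a free factor if it has a complementary free factor. -/
def IsFreeFactor {G : Type*} [Group G] (A : Subgroup G) : Prop :=
  ∃ B : Subgroup G, IsInternalFreeProduct A B

/-- A subgroup of a free group has rank `r` if it is isomorphic to the free group of rank `r`. -/
def HasRank {G : Type*} [Group G] (H : Subgroup G) (r : ℕ) : Prop :=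
  Nonempty (H ≃* FreeGroup (Fin r))

/-- The conjugate `w A w⁻¹` of a subgroup `A`. -/
def conjugateBy {G : Type*} [Group G] (w : G) (A : Subgroup G) : Subgroup G :=
  Subgroup.map (MulAut.conj w).toMonoidHom A

/-- Vertices of the free factor graph: proper nontrivial free factors of `F_n`. -/
def FFVertex (n : ℕ) := {A : Subgroup (FG n) // IsFreeFactor A ∧ A ≠ ⊥ ∧ A ≠ ⊤}

/-- The free factor graph `AF_n`: an edge joins `A` and `B` iff `A < B` or `B < A`. -/
def FFGraph (n : ℕ) : SimpleGraph (FFVertex n) where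
  Adj A B := A.val < B.val ∨ B.val < A.val
  symm := ⟨fun _ _ h => h.symm⟩
  loopless := ⟨fun A h => by cases h <;> exact lt_irrefl _ ‹_›⟩

/-- The basis element `a_i` of `F_n` (1-based indexing: `a_i = of ⟨i-1⟩` for `1 ≤ i ≤ n`). -/
def aGen (n : ℕ) (i : ℕ) : FG n :=
  if h : i - 1 < n then FreeGroup.of ⟨i - 1, h⟩ else 1

/-- The words `W_0 = a_n`, `W_{k+1} = W_k a_{k+1} W_k⁻¹`. -/
def Wseq (n : ℕ) : ℕ → FG n
  | 0 => aGen n n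
  | k + 1 => Wseq n k * aGen n (k + 1) * (Wseq n k)⁻¹

/-- The subgroup `V_j` generated by `W_{n-1} a_n W_{n-1}⁻¹` and the `a_i` with
`1 ≤ i ≤ n-1`, `i ≠ j`. -/
def Vfake (n j : ℕ) : Subgroup (FG n) :=
  Subgroup.closure
    ({Wseq n (n - 1) * aGen n n * (Wseq n (n - 1))⁻¹} ∪
      aGen n '' {i : ℕ | 1 ≤ i ∧ i ≤ n - 1 ∧ i ≠ j})

/-! The map fixing every `a_i` except `a_j ↦ W_j` and `a_n ↦ W_n` is an automorphism of `F_n`: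
it is the composite of two moves that each conjugate one basis element by a word in the others,
first `a_j` by `W_{j-1}` (a word in `a_n, a_1, …, a_{j-1}`), then `a_n` by `W_{n-1}` (a word in
`W_j, a_{j+1}, …, a_{n-1}`). It carries the splitting `F_n = ⟨a_i : i ≠ j⟩ ∗ ⟨a_j⟩` to
`F_n = V_j ∗ ⟨W_j⟩`. -/

namespace FreeGroupBasis

open Function

variable {ι G : Type*} [Group G]

theorem lift_apply_coe {H : Type*} [Group H] (b : FreeGroupBasis ι G) (f : ι → H) (i : ι) :
    b.lift f (b i) = f i := by
  simp [lift_apply_apply]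

section conjAt

variable [DecidableEq ι]

theorem lift_update_apply_of_mem_closure (b : FreeGroupBasis ι G) {i₀ : ι} {w : G}
    (hw : w ∈ Subgroup.closure (b '' {i | i ≠ i₀})) (v : G) :
    b.lift (update b i₀ v) w = w := by
  refine MonoidHom.eqOn_closure (g := MonoidHom.id G) ?_ hw
  rintro _ ⟨i, hi, rfl⟩
  simp only [lift_apply_coe, update_of_ne hi, MonoidHom.id_apply]

theorem lift_update_conj_comp_inv (b : FreeGroupBasis ι G) {i₀ : ι} {w : G}
    (hw : w ∈ Subgroup.closure (b '' {i | i ≠ i₀})) :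
    (b.lift (update b i₀ (w * b i₀ * w⁻¹))).comp (b.lift (update b i₀ (w⁻¹ * b i₀ * w))) =
      MonoidHom.id G := by
  refine b.ext_hom _ _ fun i => ?_
  rcases eq_or_ne i i₀ with rfl | hi
  · simp only [MonoidHom.comp_apply, lift_apply_coe, update_self, map_mul, map_inv,
      lift_update_apply_of_mem_closure b hw, MonoidHom.id_apply]
    group
  · simp only [MonoidHom.comp_apply, lift_apply_coe, update_of_ne hi, MonoidHom.id_apply]

/-- The inverse automorphism conjugates by `w⁻¹` instead; both fix `w`, which is a word in the
basis elements left untouched. -/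
noncomputable def conjAt (b : FreeGroupBasis ι G) (i₀ : ι) (w : G)
    (hw : w ∈ Subgroup.closure (b '' {i | i ≠ i₀})) : FreeGroupBasis ι G :=
  b.map <| MonoidHom.toMulEquiv _ _
    (by simpa only [inv_inv] using b.lift_update_conj_comp_inv (inv_mem hw))
    (b.lift_update_conj_comp_inv hw)

theorem conjAt_apply (b : FreeGroupBasis ι G) (i₀ : ι) (w : G)
    (hw : w ∈ Subgroup.closure (b '' {i | i ≠ i₀})) (i : ι) :
    b.conjAt i₀ w hw i = update b i₀ (w * b i₀ * w⁻¹) i :=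
  b.lift_apply_coe _ i

end conjAt

theorem isInternalFreeProduct_closure_image_compl (b : FreeGroupBasis ι G) (S : Set ι) :
    IsInternalFreeProduct (Subgroup.closure (b '' Sᶜ)) (Subgroup.closure (b '' S)) := by
  classical
  set A := Subgroup.closure (b '' Sᶜ)
  set B := Subgroup.closure (b '' S)
  let ψ : G →* Monoid.Coprod A B := b.lift fun i =>
    if h : i ∈ S then Monoid.Coprod.inr ⟨b i, Subgroup.subset_closure ⟨i, h, rfl⟩⟩
    else Monoid.Coprod.inl ⟨b i, Subgroup.subset_closure ⟨i, h, rfl⟩⟩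
  have hψ : ψ.comp (Monoid.Coprod.lift A.subtype B.subtype) = MonoidHom.id _ := by
    refine Monoid.Coprod.hom_ext (MonoidHom.eq_of_eqOn_dense
      Subgroup.closure_closure_coe_preimage ?_) (MonoidHom.eq_of_eqOn_dense
      Subgroup.closure_closure_coe_preimage ?_)
    · rintro ⟨_, _⟩ ⟨i, hi, rfl⟩
      simp [ψ, dif_neg (show i ∉ S from hi)]
    · rintro ⟨_, _⟩ ⟨i, hi, rfl⟩
      simp [ψ, dif_pos hi]
  have hψ' : (Monoid.Coprod.lift A.subtype B.subtype).comp ψ = MonoidHom.id _ := by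
    refine b.ext_hom _ _ fun i => ?_
    by_cases hi : i ∈ S <;> simp [ψ, hi]
  exact Function.bijective_iff_has_inverse.mpr
    ⟨ψ, DFunLike.congr_fun hψ, DFunLike.congr_fun hψ'⟩

noncomputable def restrict (b : FreeGroupBasis ι G) (S : Set ι) :
    FreeGroupBasis S (Subgroup.closure (b '' S)) :=
  let m : FreeGroup S →* G := b.repr.symm.toMonoidHom.comp (FreeGroup.map Subtype.val)
  have hm : Function.Injective m :=
    b.repr.symm.injective.comp (FreeGroup.map_injective Subtype.val_injective)
  have hrange : m.range = Subgroup.closure (b '' S) := by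
    rw [MonoidHom.range_comp, FreeGroup.range_map, Subtype.range_coe, MonoidHom.map_closure,
      Set.image_image]
    rfl
  ofRepr ((MonoidHom.ofInjective hm).trans (MulEquiv.subgroupCongr hrange)).symm

end FreeGroupBasis

theorem aGen_eq_of {n i : ℕ} (h : i - 1 < n) : aGen n i = FreeGroup.of ⟨i - 1, h⟩ :=
  dif_pos h

theorem Wseq_of_pos (n : ℕ) {k : ℕ} (hk : 0 < k) :
    Wseq n k = Wseq n (k - 1) * aGen n k * (Wseq n (k - 1))⁻¹ := by
  obtain ⟨k, rfl⟩ := Nat.exists_eq_add_of_lt hk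
  rfl

theorem Wseq_mem {n m k : ℕ} {H : Subgroup (FG n)} (hmk : m ≤ k) (hm : Wseq n m ∈ H)
    (ha : ∀ i, m < i → i ≤ k → aGen n i ∈ H) : Wseq n k ∈ H := by
  induction k, hmk using Nat.le_induction with
  | base => exact hm
  | succ k hmk ih =>
    have hk : Wseq n k ∈ H := ih fun i hi hik => ha i hi (by omega)
    exact mul_mem (mul_mem hk (ha _ (by omega) le_rfl)) (inv_mem hk)

open Function in
theorem exists_freeGroupBasis_Wseq {n j : ℕ} (hj1 : 1 ≤ j) (hj2 : j ≤ n - 1) :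
    ∃ b : FreeGroupBasis (Fin n) (FG n), b ⟨j - 1, by omega⟩ = Wseq n j ∧
      b ⟨n - 1, by omega⟩ = Wseq n n ∧
      ∀ i : Fin n, (i : ℕ) ≠ j - 1 → (i : ℕ) ≠ n - 1 → b i = FreeGroup.of i := by
  set j₀ : Fin n := ⟨j - 1, by omega⟩
  set ℓ : Fin n := ⟨n - 1, by omega⟩
  have hjℓ : j₀ ≠ ℓ := Fin.ne_of_val_ne (by simp [j₀, ℓ]; omega)
  let b₀ := FreeGroupBasis.ofFreeGroup (Fin n)
  have h₁ : Wseq n (j - 1) ∈ Subgroup.closure (b₀ '' {i | i ≠ j₀}) :=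
    Wseq_mem (Nat.zero_le _) (subset_closure ⟨ℓ, hjℓ.symm, (aGen_eq_of _).symm⟩)
      fun i hi hij => subset_closure ⟨⟨i - 1, by omega⟩, Fin.ne_of_val_ne (by simp [j₀]; omega),
        (aGen_eq_of _).symm⟩
  let b₁ := b₀.conjAt j₀ _ h₁
  have hb₁ : ∀ i ≠ j₀, b₁ i = FreeGroup.of i := fun i hi => by
    rw [FreeGroupBasis.conjAt_apply, update_of_ne hi]; rfl
  have hb₁j : b₁ j₀ = Wseq n j := by
    rw [FreeGroupBasis.conjAt_apply, update_self, Wseq_of_pos n hj1, aGen_eq_of]; rfl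
  have h₂ : Wseq n (n - 1) ∈ Subgroup.closure (b₁ '' {i | i ≠ ℓ}) :=
    Wseq_mem (by omega) (subset_closure ⟨j₀, hjℓ, hb₁j⟩)
      fun i hji hin => subset_closure ⟨⟨i - 1, by omega⟩, Fin.ne_of_val_ne (by simp [ℓ]; omega),
        by rw [hb₁ _ (Fin.ne_of_val_ne (by simp [j₀]; omega)), aGen_eq_of]⟩
  refine ⟨b₁.conjAt ℓ _ h₂, ?_, ?_, fun i hij hiℓ => ?_⟩
  · rw [FreeGroupBasis.conjAt_apply, update_of_ne hjℓ, hb₁j]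
  · rw [FreeGroupBasis.conjAt_apply, update_self, hb₁ ℓ hjℓ.symm,
      Wseq_of_pos n (k := n) (by omega), aGen_eq_of]
  · rw [FreeGroupBasis.conjAt_apply, update_of_ne (Fin.ne_of_val_ne hiℓ),
      hb₁ i (Fin.ne_of_val_ne hij)]

theorem Vfake_eq_closure_image {n j : ℕ} (hj1 : 1 ≤ j) (hj2 : j ≤ n - 1)
    (b : FreeGroupBasis (Fin n) (FG n)) (hbn : b ⟨n - 1, by omega⟩ = Wseq n n)
    (hb : ∀ i : Fin n, (i : ℕ) ≠ j - 1 → (i : ℕ) ≠ n - 1 → b i = FreeGroup.of i) :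
    Vfake n j = closure (b '' {⟨j - 1, by omega⟩}ᶜ) := by
  rw [Vfake, Set.singleton_union, ← Wseq_of_pos n (k := n) (by omega), ← hbn]
  congr 1
  ext x
  simp only [Set.mem_insert_iff, Set.mem_image, Set.mem_compl_singleton_iff]
  constructor
  · rintro (rfl | ⟨i, ⟨hi1, hin, hij⟩, rfl⟩)
    · exact ⟨_, Fin.ne_of_val_ne (by simp; omega), rfl⟩
    · exact ⟨⟨i - 1, by omega⟩, Fin.ne_of_val_ne (by simp; omega),
        by rw [hb _ (by simp; omega) (by simp; omega), aGen_eq_of]⟩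
  · rintro ⟨i, hij, rfl⟩
    have hij : (i : ℕ) ≠ j - 1 := fun h => hij (Fin.ext h)
    by_cases hin : (i : ℕ) = n - 1
    · exact .inl (congrArg b (Fin.ext hin))
    · refine .inr ⟨i + 1, ⟨by omega, by omega, by omega⟩, ?_⟩
      rw [hb i hij hin, aGen_eq_of]
      rfl

theorem fake_apartment_factors_general (n : ℕ) (j : ℕ) (hj1 : 1 ≤ j)
    (hj2 : j ≤ n - 1) :
    IsFreeFactor (Vfake n j) ∧ HasRank (Vfake n j) (n - 1) ∧
      IsInternalFreeProduct (Vfake n j)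
        (Subgroup.closure {Wseq n (j - 1) * aGen n j * (Wseq n (j - 1))⁻¹}) := by
  obtain ⟨b, hbj, hbn, hb⟩ := exists_freeGroupBasis_Wseq hj1 hj2
  have hV := Vfake_eq_closure_image hj1 hj2 b hbn hb
  have hfree := b.isInternalFreeProduct_closure_image_compl {⟨j - 1, by omega⟩}
  rw [← hV, Set.image_singleton, hbj, Wseq_of_pos n hj1] at hfree
  refine ⟨⟨_, hfree⟩, ⟨?_⟩, hfree⟩
  rw [hV]
  exact (b.restrict _).repr.trans
    (FreeGroup.freeGroupCongr (Fintype.equivFinOfCardEq (by rw [Fintype.card_compl_set]; simp)))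

/-- For `1 ≤ j ≤ n-1`, the subgroup `V_j` is a free factor of `F_n` of rank `n-1`,
and `F_n = V_j ∗ ⟨W_{j-1} a_j W_{j-1}⁻¹⟩`. -/
theorem fake_apartment_factors (n : ℕ) (hn : 3 ≤ n) (j : ℕ) (hj1 : 1 ≤ j)
    (hj2 : j ≤ n - 1) :
    IsFreeFactor (Vfake n j) ∧ HasRank (Vfake n j) (n - 1) ∧
      IsInternalFreeProduct (Vfake n j)
        (Subgroup.closure {Wseq n (j - 1) * aGen n j * (Wseq n (j - 1))⁻¹}) :=
  fake_apartment_factors_general n j hj1 hj2
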